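/- arXiv:math/0204160 — 3 statements merged into one kernel-verified Lean document; each statement's English description precedes it below -/
import Mathlib

section
/- Let φ : ℂ[[t]]^n → ℂ[[t]]^n be a map given by n formal power series in n variables with φ(0)=0, and let y(t), x(t) ∈ ℂ[[t]]^n with φ(y(t)) = x(t). Suppose k := ord_t det(Dφ(y(t))) < ∞, and let ℓ ≥ 2k+1. Then for every v ∈ ℂ[[t]]^n there exists a unique u ∈ ℂ[[t]]^n such that φ(y(t) + t^{ℓ−k} u) = x(t) + t^ℓ v. -/
/-
Newton's method in the `t`-adic topology. Put `e = ℓ - k` and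
`H(u) = φ(y + tᵉ u) - x - tˡ v`. Taylor expansion shows that `H(u + δ) ≡ H(u) + tᵉ A δ`
modulo `t^(ℓ+s+1)` whenever `tˢ ∣ δ`, where `A = Dφ(y)`; this uses `2e > ℓ`, i.e. `ℓ ≥ 2k + 1`.
Since `det A = tᵏ · unit`, the adjugate solves `tᵉ A δ = r` with `tˢ ∣ δ` as soon as
`t^(ℓ+s) ∣ r`. Hence the Newton iterates `u_{s+1} = u_s + δ_s` satisfy `t^(ℓ+s) ∣ H(u_s)` and
converge to a zero of `H`; the same estimate run backwards shows two zeros agree modulo every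
power of `t`.
-/

noncomputable section

open PowerSeries

/-- The `j`-th formal partial derivative of a multivariate formal power series. -/
def mvPDeriv {n : ℕ} (j : Fin n) (φ : MvPowerSeries (Fin n) ℂ) :
    MvPowerSeries (Fin n) ℂ :=
  fun m => ((m j : ℂ) + 1) * MvPowerSeries.coeff (m + Finsupp.single j 1) φ

/-- Evaluation (substitution) of a multivariate formal power series `φ` at an `n`-tuple
`y` of formal power series in `t`.  When every `y j` has zero constant term, the `k`-th
coefficient only receives contributions from exponents `m` with all entries `≤ k`, so the
sum below is the (finite) coefficient of `t^k` in the composite `φ(y(t))`. -/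
def mvEval {n : ℕ} (φ : MvPowerSeries (Fin n) ℂ) (y : Fin n → PowerSeries ℂ) :
    PowerSeries ℂ :=
  PowerSeries.mk fun k =>
    ∑ m ∈ Finset.Iic (Finsupp.equivFunOnFinite.symm fun _ : Fin n => k),
      MvPowerSeries.coeff m φ * PowerSeries.coeff k (∏ j, y j ^ m j)

open scoped Matrix

theorem Matrix.dvd_mulVec_apply {ι κ α : Type*} [Fintype κ] [CommSemiring α] (M : Matrix ι κ α)
    {a : α} {v : κ → α} (h : ∀ i, a ∣ v i) (j : ι) : a ∣ (M *ᵥ v) j :=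
  Finset.dvd_sum fun i _ => (h i).mul_left (M j i)

namespace MvPolynomial

variable {R S σ : Type*} [CommRing R] [CommRing S] [Algebra R S] {I : Ideal S}

theorem aeval_sub_aeval_mem {z z' : σ → S} (h : ∀ j, z j - z' j ∈ I) (P : MvPolynomial σ R) :
    aeval z P - aeval z' P ∈ I := by
  rw [← Ideal.Quotient.eq, ← Ideal.Quotient.mkₐ_eq_mk R, comp_aeval_apply, comp_aeval_apply]
  congr 2 with j
  exact Ideal.Quotient.eq.mpr (h j)

theorem aeval_add_sub_aeval_sub_sum_pderiv_mem_sq [Fintype σ] [DecidableEq σ] {z δ : σ → S}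
    (hδ : ∀ j, δ j ∈ I) (P : MvPolynomial σ R) :
    aeval (z + δ) P - aeval z P - ∑ j, aeval z (pderiv j P) * δ j ∈ I ^ 2 := by
  induction P using MvPolynomial.induction_on with
  | C a => simp
  | add p q hp hq =>
    convert add_mem hp hq using 1
    simp only [map_add, add_mul, Finset.sum_add_distrib]
    ring
  | mul_X p i hp =>
    have hsum : ∑ j, aeval z (pderiv j (p * X i)) * δ j
        = (∑ j, aeval z (pderiv j p) * δ j) * z i + aeval z p * δ i := by
      simp only [Derivation.leibniz, pderiv_X, map_add, smul_eq_mul, map_mul, aeval_X,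
        Pi.single_apply, apply_ite (aeval z), map_zero, mul_ite, ite_mul, mul_one,
        mul_zero, zero_mul, add_mul, Finset.sum_add_distrib, Finset.sum_mul, Finset.sum_ite_eq,
        Finset.mem_univ, if_true]
      rw [add_comm]
      exact congrArg₂ _ (Finset.sum_congr rfl fun j _ => by ring) rfl
    have hsplit : aeval (z + δ) (p * X i) - aeval z (p * X i)
          - ∑ j, aeval z (pderiv j (p * X i)) * δ j
        = z i * (aeval (z + δ) p - aeval z p - ∑ j, aeval z (pderiv j p) * δ j)
          + (aeval (z + δ) p - aeval z p) * δ i := by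
      rw [hsum]
      simp only [map_mul, aeval_X, Pi.add_apply]
      ring
    rw [hsplit]
    exact add_mem (Ideal.mul_mem_left _ _ hp) (sq I ▸ Ideal.mul_mem_mul
      (aeval_sub_aeval_mem (fun j => by simpa using hδ j) p) (hδ i))

end MvPolynomial

namespace PowerSeries

variable {R : Type*} [CommRing R]

theorem coeff_prod_pow_eq_zero {ι : Type*} [Fintype ι] {z : ι → R⟦X⟧}
    (hz : ∀ j, constantCoeff (z j) = 0) {m : ι → ℕ} {p : ℕ} {j : ι} (h : p < m j) :
    coeff p (∏ i, z i ^ m i) = 0 := by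
  have : (X : R⟦X⟧) ^ (p + 1) ∣ ∏ i, z i ^ m i :=
    (pow_dvd_pow X h).trans <| (pow_dvd_pow_of_dvd (X_dvd_iff.mpr (hz j)) _).trans <|
      Finset.dvd_prod_of_mem _ (Finset.mem_univ j)
  exact X_pow_dvd_iff.mp this p p.lt_succ_self

theorem eq_zero_of_forall_X_pow_dvd {f : R⟦X⟧} (h : ∀ s, (X : R⟦X⟧) ^ s ∣ f) : f = 0 :=
  ext fun p => by rw [map_zero]; exact X_pow_dvd_iff.mp (h (p + 1)) p p.lt_succ_self

theorem smodEq_span_X_pow_iff {f g : R⟦X⟧} {m : ℕ} :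
    f ≡ g [SMOD (Ideal.span {(X : R⟦X⟧)} ^ m • ⊤ : Submodule R⟦X⟧ R⟦X⟧)] ↔
      (X : R⟦X⟧) ^ m ∣ f - g := by
  rw [SModEq.sub_mem, smul_eq_mul, Ideal.mul_top, Ideal.span_singleton_pow,
    Ideal.mem_span_singleton]

theorem exists_X_pow_dvd_sub_of_X_pow_dvd_succ_sub {f : ℕ → R⟦X⟧}
    (hf : ∀ s, (X : R⟦X⟧) ^ s ∣ f (s + 1) - f s) : ∃ g, ∀ s, (X : R⟦X⟧) ^ s ∣ g - f s := by
  have hcauchy : ∀ {m n}, m ≤ n → (X : R⟦X⟧) ^ m ∣ f n - f m := by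
    intro m n hmn
    induction n, hmn using Nat.le_induction with
    | base => simp
    | succ n hmn ih =>
      rw [← sub_add_sub_cancel]
      exact dvd_add ((pow_dvd_pow X hmn).trans (hf n)) ih
  obtain ⟨g, hg⟩ := IsPrecomplete.prec (I := Ideal.span {(X : R⟦X⟧)}) inferInstance
    fun hmn => smodEq_span_X_pow_iff.mpr (dvd_sub_comm.mp (hcauchy hmn))
  exact ⟨g, fun s => dvd_sub_comm.mp (smodEq_span_X_pow_iff.mp (hg s))⟩

variable {ι : Type*} [Fintype ι] {A : Matrix ι ι R⟦X⟧} {c : R⟦X⟧} {k : ℕ}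

theorem X_pow_dvd_of_X_pow_add_dvd_mulVec [DecidableEq ι] (hc : IsUnit c)
    (hA : A.det = X ^ k * c) {m : ℕ} {δ : ι → R⟦X⟧} (h : ∀ i, (X : R⟦X⟧) ^ (k + m) ∣ (A *ᵥ δ) i) (j : ι) :
    (X : R⟦X⟧) ^ m ∣ δ j := by
  have hdet : (A.adjugate *ᵥ (A *ᵥ δ)) j = X ^ k * (c * δ j) := by
    rw [Matrix.mulVec_mulVec, Matrix.adjugate_mul, Matrix.smul_mulVec, Matrix.one_mulVec, hA,
      Pi.smul_apply, smul_eq_mul, mul_assoc]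
  have : (X : R⟦X⟧) ^ k * X ^ m ∣ X ^ k * (c * δ j) := by
    rw [← hdet, ← pow_add]
    exact A.adjugate.dvd_mulVec_apply h j
  exact hc.dvd_mul_left.mp ((IsLeftRegular.dvd_cancel_left X_pow_mul_injective).mp this)

theorem exists_X_pow_mul_mulVec_eq [DecidableEq ι] (hc : IsUnit c) (hA : A.det = X ^ k * c)
    {e s : ℕ} {r : ι → R⟦X⟧} (hr : ∀ i, (X : R⟦X⟧) ^ (e + k + s) ∣ r i) :
    ∃ δ : ι → R⟦X⟧, (∀ j, (X : R⟦X⟧) ^ s ∣ δ j) ∧ ∀ i, X ^ e * (A *ᵥ δ) i = r i := by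
  obtain ⟨c', hc'⟩ := hc.exists_left_inv
  choose g hg using A.adjugate.dvd_mulVec_apply hr
  refine ⟨fun j => X ^ s * (c' * g j), fun j => dvd_mul_right _ _, fun i => ?_⟩
  have hadj : A.adjugate *ᵥ r = (X : R⟦X⟧) ^ (e + k + s) • g := funext hg
  have hAg : X ^ (e + k + s) * (A *ᵥ g) i = X ^ k * (c * r i) := by
    have := congrFun (Matrix.mulVec_mulVec r A A.adjugate) i
    rw [Matrix.mul_adjugate, Matrix.smul_mulVec, Matrix.one_mulVec, hadj, Matrix.mulVec_smul,
      hA] at this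
    simpa only [Pi.smul_apply, smul_eq_mul, mul_assoc] using this
  have hδ : (fun j => X ^ s * (c' * g j)) = ((X : R⟦X⟧) ^ s * c') • g := by
    funext j
    simp only [Pi.smul_apply, smul_eq_mul, mul_assoc]
  refine X_pow_mul_cancel (k := k) ?_
  rw [hδ, Matrix.mulVec_smul, Pi.smul_apply, smul_eq_mul]
  linear_combination c' * hAg + X ^ k * r i * hc'

def HasLinearApprox (H : (ι → R⟦X⟧) → ι → R⟦X⟧) (A : Matrix ι ι R⟦X⟧) (e ℓ : ℕ) : Prop :=
  ∀ u δ s, (∀ j, (X : R⟦X⟧) ^ s ∣ δ j) →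
    ∀ i, (X : R⟦X⟧) ^ (ℓ + s + 1) ∣ H (u + δ) i - H u i - X ^ e * (A *ᵥ δ) i

namespace HasLinearApprox

variable {H : (ι → R⟦X⟧) → ι → R⟦X⟧} {e : ℕ}

theorem exists_newton_seq [DecidableEq ι] (hH : HasLinearApprox H A e (e + k)) (hc : IsUnit c)
    (hA : A.det = X ^ k * c) (h0 : ∀ i, (X : R⟦X⟧) ^ (e + k) ∣ H 0 i) :
    ∃ u : ℕ → ι → R⟦X⟧, (∀ s i, (X : R⟦X⟧) ^ (e + k + s) ∣ H (u s) i) ∧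
      ∀ s j, (X : R⟦X⟧) ^ s ∣ u (s + 1) j - u s j := by
  choose! δ hδ hAδ using fun s (r : ι → R⟦X⟧) =>
    exists_X_pow_mul_mulVec_eq (e := e) (s := s) (r := r) hc hA
  let u : ℕ → ι → R⟦X⟧ := fun s => Nat.rec 0 (fun s us => us + δ s (-H us)) s
  have hu : ∀ s i, (X : R⟦X⟧) ^ (e + k + s) ∣ H (u s) i := by
    intro s
    induction s with
    | zero => exact h0
    | succ s ih =>
      have hr : ∀ i, (X : R⟦X⟧) ^ (e + k + s) ∣ (-H (u s)) i := fun i => (ih i).neg_right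
      intro i
      have := hH (u s) (δ s (-H (u s))) s (hδ s _ hr) i
      rwa [hAδ s _ hr, Pi.neg_apply, sub_neg_eq_add, sub_add_cancel] at this
  refine ⟨u, hu, fun s j => ?_⟩
  simpa only [u, Pi.add_apply, add_sub_cancel_left] using
    hδ s (-H (u s)) (fun i => (hu s i).neg_right) j

theorem eq_zero_of_X_pow_dvd_sub {ℓ : ℕ} (hH : HasLinearApprox H A e ℓ) {u : ℕ → ι → R⟦X⟧}
    (hu : ∀ s i, (X : R⟦X⟧) ^ (ℓ + s) ∣ H (u s) i) {g : ι → R⟦X⟧}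
    (hg : ∀ s j, (X : R⟦X⟧) ^ s ∣ g j - u s j) : H g = 0 := by
  funext i
  refine eq_zero_of_forall_X_pow_dvd fun s => ?_
  have hlin := hH (u s) (g - u s) s (hg s) i
  rw [add_sub_cancel] at hlin
  have hsplit : H g i = (H g i - H (u s) i - X ^ e * (A *ᵥ (g - u s)) i) + H (u s) i
      + X ^ e * (A *ᵥ (g - u s)) i := by ring
  rw [hsplit]
  exact dvd_add (dvd_add ((pow_dvd_pow X (by omega)).trans hlin)
    ((pow_dvd_pow X (by omega)).trans (hu s i)))
    (dvd_mul_of_dvd_right (A.dvd_mulVec_apply (hg s) i) _)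

theorem eq_of_eq_zero [DecidableEq ι] (hH : HasLinearApprox H A e (e + k)) (hc : IsUnit c)
    (hA : A.det = X ^ k * c) {u u' : ι → R⟦X⟧} (hu : H u = 0) (hu' : H u' = 0) : u' = u := by
  have hclose : ∀ s j, (X : R⟦X⟧) ^ s ∣ (u' - u) j := by
    intro s
    induction s with
    | zero => simp
    | succ s ih =>
      refine X_pow_dvd_of_X_pow_add_dvd_mulVec hc hA fun i => ?_
      have hlin := hH u (u' - u) s ih i
      rw [add_sub_cancel, hu', hu, Pi.zero_apply, sub_self, zero_sub, dvd_neg,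
        show e + k + s + 1 = e + (k + (s + 1)) by omega, pow_add] at hlin
      exact (IsLeftRegular.dvd_cancel_left X_pow_mul_injective).mp hlin
  funext j
  exact sub_eq_zero.mp (eq_zero_of_forall_X_pow_dvd fun s => hclose s j)

theorem existsUnique_eq_zero [DecidableEq ι] (hH : HasLinearApprox H A e (e + k)) (hc : IsUnit c)
    (hA : A.det = X ^ k * c) (h0 : ∀ i, (X : R⟦X⟧) ^ (e + k) ∣ H 0 i) :
    ∃! u, H u = 0 := by
  obtain ⟨u, hu, hstep⟩ := hH.exists_newton_seq hc hA h0
  choose g hg using fun j =>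
    exists_X_pow_dvd_sub_of_X_pow_dvd_succ_sub (f := fun s => u s j) (hstep · j)
  have hHg : H g = 0 := hH.eq_zero_of_X_pow_dvd_sub hu fun s j => hg j s
  exact ⟨g, hHg, fun u' hu' => hH.eq_of_eq_zero hc hA hHg hu'⟩

end HasLinearApprox

end PowerSeries

open MvPolynomial (aeval pderiv)

variable {n : ℕ}

theorem X_pow_dvd_mvEval_sub_aeval {z : Fin n → ℂ⟦X⟧} (hz : ∀ j, constantCoeff (z j) = 0)
    {φ : MvPowerSeries (Fin n) ℂ} {P : MvPolynomial (Fin n) ℂ} {d : ℕ}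
    (hP : ∀ m : Fin n →₀ ℕ, (∀ j, m j < d) → P.coeff m = MvPowerSeries.coeff m φ) :
    X ^ d ∣ mvEval φ z - aeval z P := by
  rw [X_pow_dvd_iff]
  intro a ha
  set q : (Fin n →₀ ℕ) → ℂ := fun m => coeff a (∏ j, z j ^ m j)
  set box := Finset.Iic (Finsupp.equivFunOnFinite.symm fun _ : Fin n => a)
  have hq : ∀ m ∉ box, q m = 0 := fun m hm => by
    obtain ⟨j, hj⟩ : ∃ j, a < m j := by simpa [box, Finsupp.le_def] using hm
    exact coeff_prod_pow_eq_zero hz hj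
  have hcoeff : coeff a (aeval z P) = ∑ m ∈ P.support, P.coeff m * q m := by
    simp only [MvPolynomial.aeval_def, MvPolynomial.eval₂_eq', map_sum,
      PowerSeries.algebraMap_apply, Algebra.algebraMap_self_apply, coeff_C_mul, q]
  rw [map_sub, sub_eq_zero, hcoeff, mvEval, coeff_mk]
  calc ∑ m ∈ box, MvPowerSeries.coeff m φ * q m = ∑ m ∈ box, P.coeff m * q m :=
        Finset.sum_congr rfl fun m hm => by
          rw [hP m fun j => (Finset.mem_Iic.mp hm j).trans_lt ha]
    _ = ∑ m ∈ box ∪ P.support, P.coeff m * q m :=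
        Finset.sum_subset Finset.subset_union_left fun m _ hm => by rw [hq m hm, mul_zero]
    _ = ∑ m ∈ P.support, P.coeff m * q m :=
        (Finset.sum_subset Finset.subset_union_right fun m _ hm => by
          rw [MvPolynomial.notMem_support_iff.mp hm, zero_mul]).symm

theorem X_pow_dvd_mvEval_sub_mvEval (φ : MvPowerSeries (Fin n) ℂ) {z z' : Fin n → ℂ⟦X⟧}
    (hz : ∀ j, constantCoeff (z j) = 0) (hz' : ∀ j, constantCoeff (z' j) = 0) {d : ℕ}
    (h : ∀ j, X ^ d ∣ z j - z' j) :
    X ^ d ∣ mvEval φ z - mvEval φ z' := by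
  set P := MvPowerSeries.trunc' ℂ (Finsupp.equivFunOnFinite.symm fun _ => d) φ
  have hP : ∀ m : Fin n →₀ ℕ, (∀ j, m j < d) → P.coeff m = MvPowerSeries.coeff m φ :=
    fun m hm => by rw [MvPowerSeries.coeff_trunc', if_pos (show m ≤ _ from fun j => (hm j).le)]
  have hPz : X ^ d ∣ aeval z P - aeval z' P := by
    simpa only [Ideal.mem_span_singleton] using
      MvPolynomial.aeval_sub_aeval_mem (fun j => Ideal.mem_span_singleton.mpr (h j)) P
  have := dvd_add (dvd_sub (X_pow_dvd_mvEval_sub_aeval hz hP)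
    (X_pow_dvd_mvEval_sub_aeval hz' hP)) hPz
  convert this using 1
  ring

theorem X_pow_dvd_mvEval_add_sub_mvEval_sub_sum (φ : MvPowerSeries (Fin n) ℂ) {z δ : Fin n → ℂ⟦X⟧}
    (hz : ∀ j, constantCoeff (z j) = 0) {d : ℕ} (hδ : ∀ j, X ^ d ∣ δ j) :
    X ^ (2 * d) ∣ mvEval φ (z + δ) - mvEval φ z - ∑ j, mvEval (mvPDeriv j φ) z * δ j := by
  rcases Nat.eq_zero_or_pos d with rfl | hd
  · simp
  have hzδ : ∀ j, constantCoeff ((z + δ) j) = 0 := fun j => by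
    rw [Pi.add_apply, map_add, hz j, zero_add, ← coeff_zero_eq_constantCoeff_apply]
    exact X_pow_dvd_iff.mp (hδ j) 0 hd
  set P := MvPowerSeries.trunc' ℂ (Finsupp.equivFunOnFinite.symm fun _ => 2 * d) φ
  have hP : ∀ m : Fin n →₀ ℕ, (∀ j, m j < 2 * d) → P.coeff m = MvPowerSeries.coeff m φ :=
    fun m hm => by rw [MvPowerSeries.coeff_trunc', if_pos (show m ≤ _ from fun j => (hm j).le)]
  have hP' : ∀ i, ∀ m : Fin n →₀ ℕ, (∀ j, m j < 2 * d) →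
      (pderiv i P).coeff m = MvPowerSeries.coeff m (mvPDeriv i φ) := fun i m hm => by
    rw [MvPolynomial.coeff_pderiv, MvPowerSeries.coeff_trunc', if_pos, mul_comm]
    · rfl
    intro j
    have := hm j
    simp only [Finsupp.add_apply, Finsupp.single_apply, Finsupp.coe_equivFunOnFinite_symm]
    split_ifs <;> omega
  have hTaylor : X ^ (2 * d) ∣
      aeval (z + δ) P - aeval z P - ∑ j, aeval z (pderiv j P) * δ j := by
    have := MvPolynomial.aeval_add_sub_aeval_sub_sum_pderiv_mem_sq (z := z)
      (I := Ideal.span {X ^ d}) (fun j => Ideal.mem_span_singleton.mpr (hδ j)) P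
    rwa [Ideal.span_singleton_pow, Ideal.mem_span_singleton, ← pow_mul, mul_comm] at this
  have hsplit : mvEval φ (z + δ) - mvEval φ z - ∑ j, mvEval (mvPDeriv j φ) z * δ j =
      (mvEval φ (z + δ) - aeval (z + δ) P) - (mvEval φ z - aeval z P)
        - ∑ j, (mvEval (mvPDeriv j φ) z - aeval z (pderiv j P)) * δ j
        + (aeval (z + δ) P - aeval z P - ∑ j, aeval z (pderiv j P) * δ j) := by
    simp only [sub_mul, Finset.sum_sub_distrib]
    ring
  rw [hsplit]
  refine dvd_add (dvd_sub (dvd_sub (X_pow_dvd_mvEval_sub_aeval hzδ hP)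
    (X_pow_dvd_mvEval_sub_aeval hz hP)) (Finset.dvd_sum fun j _ => ?_)) hTaylor
  exact (X_pow_dvd_mvEval_sub_aeval hz (hP' j)).mul_right _

theorem X_pow_dvd_mvEval_add_X_pow_mul_sub (φ : MvPowerSeries (Fin n) ℂ) {y : Fin n → ℂ⟦X⟧}
    (hy : ∀ j, constantCoeff (y j) = 0) {e s : ℕ} (he : 0 < e) (u δ : Fin n → ℂ⟦X⟧)
    (hδ : ∀ j, X ^ s ∣ δ j) :
    X ^ (2 * e + s) ∣ mvEval φ (fun j => y j + X ^ e * (u j + δ j))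
      - mvEval φ (fun j => y j + X ^ e * u j) - X ^ e * ∑ j, mvEval (mvPDeriv j φ) y * δ j := by
  set z : Fin n → ℂ⟦X⟧ := fun j => y j + X ^ e * u j
  have hz : ∀ j, constantCoeff (z j) = 0 := fun j => by simp [z, hy j, he.ne']
  have hTaylor := X_pow_dvd_mvEval_add_sub_mvEval_sub_sum φ hz (δ := fun j => X ^ e * δ j)
    (d := e + s) fun j => by rw [pow_add]; exact mul_dvd_mul_left _ (hδ j)
  have hJac : ∀ j, X ^ e ∣ mvEval (mvPDeriv j φ) z - mvEval (mvPDeriv j φ) y := fun j =>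
    X_pow_dvd_mvEval_sub_mvEval _ hz hy fun j' => by simp [z]
  have hsplit : mvEval φ (fun j => y j + X ^ e * (u j + δ j)) - mvEval φ z
      - X ^ e * ∑ j, mvEval (mvPDeriv j φ) y * δ j =
      (mvEval φ (z + fun j => X ^ e * δ j) - mvEval φ z
        - ∑ j, mvEval (mvPDeriv j φ) z * (X ^ e * δ j))
      + ∑ j, (mvEval (mvPDeriv j φ) z - mvEval (mvPDeriv j φ) y) * (X ^ e * δ j) := by
    have : (fun j => y j + X ^ e * (u j + δ j)) = z + fun j => X ^ e * δ j := by
      funext j; simp only [z, Pi.add_apply]; ring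
    rw [this, Finset.mul_sum]
    simp only [mul_left_comm (X ^ e : ℂ⟦X⟧), sub_mul, Finset.sum_sub_distrib]
    ring
  rw [hsplit]
  refine dvd_add ((pow_dvd_pow X (by omega)).trans hTaylor) (Finset.dvd_sum fun j _ => ?_)
  rw [show 2 * e + s = e + (e + s) by omega, pow_add, pow_add X e s]
  exact mul_dvd_mul (hJac j) (mul_dvd_mul_left _ (hδ j))

theorem stmt_0_general (n : ℕ) (φ : Fin n → MvPowerSeries (Fin n) ℂ)
    (y x : Fin n → PowerSeries ℂ)
    (hy0 : ∀ j, PowerSeries.constantCoeff (y j) = 0)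
    (hyx : ∀ i, mvEval (φ i) y = x i)
    (k : ℕ)
    (hk : (Matrix.det fun i j : Fin n => mvEval (mvPDeriv j (φ i)) y).order = (k : ℕ∞))
    (ℓ : ℕ) (hℓ : 2 * k + 1 ≤ ℓ) (v : Fin n → PowerSeries ℂ) :
    ∃! u : Fin n → PowerSeries ℂ,
      ∀ i, mvEval (φ i) (fun j => y j + PowerSeries.X ^ (ℓ - k) * u j) =
        x i + PowerSeries.X ^ ℓ * v i := by
  set A : Matrix (Fin n) (Fin n) ℂ⟦X⟧ := fun i j => mvEval (mvPDeriv j (φ i)) y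
  have hdet : A.det ≠ 0 := fun h => by simp [h] at hk
  have hA : A.det = X ^ k * divXPowOrder A.det := by
    have := X_pow_order_mul_divXPowOrder (f := A.det)
    rw [hk, ENat.toNat_natCast] at this
    exact this.symm
  set e := ℓ - k
  set H : (Fin n → ℂ⟦X⟧) → Fin n → ℂ⟦X⟧ := fun u i =>
    mvEval (φ i) (fun j => y j + X ^ e * u j) - x i - X ^ ℓ * v i
  have hℓe : ℓ = e + k := by omega
  have h0 : ∀ i, X ^ (e + k) ∣ H 0 i := fun i => by
    simp [H, ← hℓe, hyx i]
  have hH : HasLinearApprox H A e (e + k) := fun u δ s hδ i => by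
    have := X_pow_dvd_mvEval_add_X_pow_mul_sub (φ i) hy0 (by omega : 0 < e) u δ hδ
    convert (pow_dvd_pow X (show e + k + s + 1 ≤ 2 * e + s by omega)).trans this using 1
    simp only [H, Pi.add_apply, Matrix.mulVec, dotProduct, A]
    ring
  obtain ⟨u, hu, huniq⟩ := hH.existsUnique_eq_zero (isUnit_divided_by_X_pow_order hdet) hA h0
  refine ⟨u, fun i => ?_, fun u' hu' => huniq u' (funext fun i => ?_)⟩
  · have h : H u i = 0 := congrFun hu i
    simp only [H] at h
    linear_combination h
  · simp only [H, hu' i, Pi.zero_apply]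
    ring

/-- formal inverse function theorem of Denef–Loeser: let
`φ : ℂ[[t]]^n → ℂ[[t]]^n` be given by `n` formal power series in `n` variables with
`φ(0) = 0`, and `y, x ∈ ℂ[[t]]^n` (arcs through the origin) with `φ(y(t)) = x(t)`.
If `k = ord_t det Dφ(y(t)) < ∞` and `ℓ ≥ 2k + 1`, then for every `v ∈ ℂ[[t]]^n` there is
a unique `u ∈ ℂ[[t]]^n` with `φ(y(t) + t^{ℓ-k} u) = x(t) + t^ℓ v`. -/
theorem stmt_0 (n : ℕ) (φ : Fin n → MvPowerSeries (Fin n) ℂ)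
    (hφ0 : ∀ i, MvPowerSeries.constantCoeff (φ i) = 0)
    (y x : Fin n → PowerSeries ℂ)
    (hy0 : ∀ j, PowerSeries.constantCoeff (y j) = 0)
    (hyx : ∀ i, mvEval (φ i) y = x i)
    (k : ℕ)
    (hk : (Matrix.det fun i j : Fin n => mvEval (mvPDeriv j (φ i)) y).order = (k : ℕ∞))
    (ℓ : ℕ) (hℓ : 2 * k + 1 ≤ ℓ) (v : Fin n → PowerSeries ℂ) :
    ∃! u : Fin n → PowerSeries ℂ,
      ∀ i, mvEval (φ i) (fun j => y j + PowerSeries.X ^ (ℓ - k) * u j) =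
        x i + PowerSeries.X ^ ℓ * v i :=
  stmt_0_general n φ y x hy0 hyx k hk ℓ hℓ v
end
end

section
/- Let A be an n×n matrix over ℂ[[t]] with ord_t(det A) = k for some natural number k. Then the ℂ-vector space { ū ∈ (ℂ[[t]]/(t^k))^n : A·ū = 0 in (ℂ[[t]]/(t^k))^n } has dimension exactly k over ℂ. -/
/-!
Multiplication by `A` on `(ℂ⟦t⟧/(t^k))^n` is an endomorphism of a finite-dimensional space, so
its kernel has the dimension of its cokernel. Since `(t^k) = (det A)` and `det A` kills
`coker A` (via the adjugate), that cokernel is the cokernel of `A` on `ℂ⟦t⟧^n`. By the Smith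
normal form this is `⨁ ℂ⟦t⟧/(a_i)` with `∏ a_i ~ det A`, of dimension `∑ ord a_i = ord det A = k`.
-/

open PowerSeries Module

namespace PowerSeries

variable {K : Type*} [Field K]

theorem span_singleton_eq_span_X_pow_order {f : K⟦X⟧} (hf : f ≠ 0) :
    Ideal.span {f} = Ideal.span {X ^ f.order.toNat} := by
  refine Ideal.span_singleton_eq_span_singleton.mpr ?_
  conv_lhs => rw [← X_pow_order_mul_divXPowOrder (f := f)]
  exact associated_mul_unit_left _ _ (isUnit_divided_by_X_pow_order hf)

noncomputable def quotientSpanXPowEquiv (m : ℕ) :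
    (K⟦X⟧ ⧸ Ideal.span {(X : K⟦X⟧) ^ m}) ≃ₗ[K] (Fin m → K) :=
  let coeffs : K⟦X⟧ →ₗ[K] Fin m → K := LinearMap.pi fun i => coeff i
  have ker_coeffs : LinearMap.ker coeffs = (Ideal.span {(X : K⟦X⟧) ^ m}).restrictScalars K := by
    ext f
    simp [coeffs, Ideal.mem_span_singleton, X_pow_dvd_iff, funext_iff, Fin.forall_iff]
  have coeffs_surjective : Function.Surjective coeffs := fun c =>
    ⟨mk fun j => if h : j < m then c ⟨j, h⟩ else 0, funext fun i => by simp [coeffs]⟩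
  (Submodule.Quotient.restrictScalarsEquiv K _).symm ≪≫ₗ
    Submodule.quotEquivOfEq _ _ ker_coeffs.symm ≪≫ₗ
    coeffs.quotKerEquivOfSurjective coeffs_surjective

theorem finite_quotient_span_singleton {f : K⟦X⟧} (hf : f ≠ 0) :
    Module.Finite K (K⟦X⟧ ⧸ Ideal.span {f}) := by
  rw [span_singleton_eq_span_X_pow_order hf]
  exact Module.Finite.equiv (quotientSpanXPowEquiv _).symm

theorem finrank_quotient_span_singleton {f : K⟦X⟧} (hf : f ≠ 0) :
    (finrank K (K⟦X⟧ ⧸ Ideal.span {f}) : ℕ∞) = f.order := by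
  rw [span_singleton_eq_span_X_pow_order hf, (quotientSpanXPowEquiv _).finrank_eq,
    finrank_fin_fun, ENat.natCast_toNat (order_finite_iff_ne_zero.mpr hf).ne]

end PowerSeries

section SmithNormalForm

variable {ι R M : Type*} [CommRing R] [IsDomain R] [IsPrincipalIdealRing R]
  [AddCommGroup M] [Module R M] [Fintype ι] [DecidableEq ι]

theorem Submodule.associated_det_subtype_comp_prod_smithNormalFormCoeffs
    {N : Submodule R M} (b : Basis ι R M) (h : finrank R N = finrank R M) (e : M ≃ₗ[R] N) :
    Associated (LinearMap.det (N.subtype ∘ₗ e)) (∏ i, smithNormalFormCoeffs b h i) := by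
  set b' := smithNormalFormTopBasis b h
  set a := smithNormalFormCoeffs b h
  let e' : M ≃ₗ[R] N := b'.equiv (smithNormalFormBotBasis b h) (Equiv.refl ι)
  have toMatrix_eq_diagonal : LinearMap.toMatrix b' b' (N.subtype ∘ₗ e') = Matrix.diagonal a := by
    ext i j
    rw [LinearMap.toMatrix_apply]
    rcases eq_or_ne i j with rfl | hij
    · simp [e', b', a, Basis.equiv_apply]
    · simp [e', b', a, Basis.equiv_apply, hij]
  refine (LinearMap.associated_det_comp_equiv _ e e').trans (Associated.of_eq ?_)
  rw [← LinearMap.det_toMatrix b', toMatrix_eq_diagonal, Matrix.det_diagonal]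

end SmithNormalForm

namespace Matrix

theorem mulVecLin_injective_of_det_ne_zero {n R : Type*} [CommRing R] [IsDomain R]
    [Fintype n] [DecidableEq n] {A : Matrix n n R} (hA : A.det ≠ 0) :
    Function.Injective A.mulVecLin := by
  rw [← LinearMap.ker_eq_bot, LinearMap.ker_eq_bot']
  intro v hv
  by_contra hv0
  exact hA (exists_mulVec_eq_zero_iff.mp ⟨v, hv0, hv⟩)

theorem finrank_quotient_range_mulVecLin_eq_order_det {n K : Type*} [Field K] [Fintype n]
    [DecidableEq n] {A : Matrix n n K⟦X⟧} (hA : A.det ≠ 0) :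
    (finrank K ((n → K⟦X⟧) ⧸ LinearMap.range A.mulVecLin) : ℕ∞) = A.det.order := by
  let e := LinearEquiv.ofInjective _ (mulVecLin_injective_of_det_ne_zero hA)
  have hN := e.finrank_eq.symm
  let b := Pi.basisFun K⟦X⟧ n
  set a := Submodule.smithNormalFormCoeffs b hN
  have a_ne_zero : ∀ i, a i ≠ 0 := Submodule.smithNormalFormCoeffs_ne_zero b hN
  have := fun i => finite_quotient_span_singleton (a_ne_zero i)
  have det_eq : LinearMap.det ((LinearMap.range A.mulVecLin).subtype ∘ₗ e) = A.det := by
    rw [← LinearMap.det_toLin' A]; rfl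
  obtain ⟨u, hu⟩ :=
    (det_eq ▸ Submodule.associated_det_subtype_comp_prod_smithNormalFormCoeffs b hN e).symm
  rw [Submodule.finrank_quotient_eq_sum K b hN, Nat.cast_sum, ← hu, order_mul,
    order_zero_of_unit u.isUnit, add_zero, order_prod]
  exact Finset.sum_congr rfl fun i _ => finrank_quotient_span_singleton (a_ne_zero i)

variable {n R : Type*} [CommRing R] [Fintype n] [DecidableEq n]

theorem det_smul_mem_range_mulVecLin (A : Matrix n n R) (v : n → R) :
    A.det • v ∈ LinearMap.range A.mulVecLin :=
  ⟨A.adjugate *ᵥ v, by rw [mulVecLin_apply, mulVec_mulVec, mul_adjugate, smul_mulVec, one_mulVec]⟩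

noncomputable def quotientRangeMulVecLinMapEquiv (A : Matrix n n R) (I : Ideal R)
    (hI : I ≤ Ideal.span {A.det}) :
    ((n → R ⧸ I) ⧸ LinearMap.range (A.map (Ideal.Quotient.mk I)).mulVecLin) ≃ₗ[R]
      ((n → R) ⧸ LinearMap.range A.mulVecLin) :=
  let π : (n → R) →ₗ[R] (n → R ⧸ I) := I.mkQ.compLeft n
  have π_surjective : Function.Surjective π := fun v =>
    ⟨fun i => (Ideal.Quotient.mk_surjective (v i)).choose,
      funext fun i => (Ideal.Quotient.mk_surjective (v i)).choose_spec⟩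
  have π_mulVec : ∀ v, π (A *ᵥ v) = A.map (Ideal.Quotient.mk I) *ᵥ π v := fun v =>
    funext fun i => RingHom.map_mulVec (Ideal.Quotient.mk I) A v i
  let ψ := (Submodule.mkQ _).restrictScalars R ∘ₗ π
  have ker_ψ : LinearMap.ker ψ = LinearMap.range A.mulVecLin := by
    ext x
    simp only [ψ, LinearMap.mem_ker, LinearMap.comp_apply, LinearMap.restrictScalars_apply,
      Submodule.mkQ_apply, Submodule.Quotient.mk_eq_zero]
    constructor
    · rintro ⟨w, hw⟩
      obtain ⟨y, rfl⟩ := π_surjective w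
      have π_eq_zero : π (x - A *ᵥ y) = 0 := by
        rw [map_sub, π_mulVec, ← mulVecLin_apply, hw, sub_self]
      choose c hc using fun i => Ideal.mem_span_singleton'.mp
        (hI (Ideal.Quotient.eq_zero_iff_mem.mp (congrFun π_eq_zero i)))
      have x_eq : x = A *ᵥ y + A.det • c := by
        rw [← sub_eq_iff_eq_add']
        exact funext fun i => by simp [← hc i, mul_comm]
      rw [x_eq]
      exact add_mem ⟨y, rfl⟩ (A.det_smul_mem_range_mulVecLin c)
    · rintro ⟨y, rfl⟩
      exact ⟨π y, (π_mulVec y).symm⟩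
  ((Submodule.quotEquivOfEq _ _ ker_ψ.symm).trans
    (ψ.quotKerEquivOfSurjective ((Submodule.mkQ_surjective _).comp π_surjective))).symm

end Matrix

theorem LinearMap.finrank_ker_eq_finrank_quotient_range {K V : Type*} [Field K] [AddCommGroup V]
    [Module K V] [FiniteDimensional K V] (f : V →ₗ[K] V) :
    finrank K (ker f) = finrank K (V ⧸ range f) := by
  have := f.finrank_range_add_finrank_ker
  have := (range f).finrank_quotient_add_finrank
  omega

/-- For an `n × n` matrix `A` over `ℂ[[t]]` with `ord_t (det A) = k < ∞`,
the `ℂ`-vector space `{ū ∈ (ℂ[[t]]/(t^k))^n : A·ū = 0}` — the kernel of multiplication by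
the reduction of `A` mod `t^k` — has dimension exactly `k` over `ℂ`. -/
theorem stmt_1 (n k : ℕ) (A : Matrix (Fin n) (Fin n) (PowerSeries ℂ))
    (hA : A.det.order = (k : ℕ∞)) :
    Module.finrank ℂ
      (LinearMap.ker
        (((A.map (Ideal.Quotient.mk
            (Ideal.span {(PowerSeries.X : PowerSeries ℂ) ^ k}))).mulVecLin).restrictScalars ℂ))
      = k := by
  have hdet : A.det ≠ 0 := fun h => by simp [h] at hA
  have span_X_pow_eq : Ideal.span {(X : ℂ⟦X⟧) ^ k} = Ideal.span {A.det} := by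
    rw [span_singleton_eq_span_X_pow_order hdet, hA, ENat.toNat_natCast]
  have := finite_quotient_span_singleton (pow_ne_zero k (X_ne_zero (R := ℂ)))
  rw [LinearMap.finrank_ker_eq_finrank_quotient_range, LinearMap.range_restrictScalars,
    (Submodule.Quotient.restrictScalarsEquiv ℂ _).finrank_eq,
    ((A.quotientRangeMulVecLinMapEquiv _ span_X_pow_eq.le).restrictScalars ℂ).finrank_eq]
  exact_mod_cast (A.finrank_quotient_range_mulVecLin_eq_order_det hdet).trans hA
end

section
/- Let G be a group (or monoid) and let V, W be finite-dimensional semisimple representations of G over a field k of characteristic zero. If tr(g; V) = tr(g; W) for every g ∈ G, then V and W are isomorphic as representations of G. -/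
/-!
Pass from the monoid to the algebra `A = k[G]`: the trace of every `a ∈ A` agrees on `V` and `W`.
Dividing `A` by the annihilator of `V × W` gives a finite-dimensional algebra with a faithful
semisimple module, hence a semisimple ring `B`. Over `B` every simple module `S` is a direct summand
of `B`, and the corresponding idempotent `e` acts nontrivially on a module exactly when `S` maps
nontrivially into it. In characteristic zero the trace of an idempotent is its (nonzero) rank, so
`e` acts nontrivially on `W` as soon as it does on `V`: every simple summand of `V` occurs in `W`.
Cancelling it and inducting on the dimension gives `V ≅ W`.
-/

open LinearMap Module

instance Submodule.finiteDimensional_of_isScalarTower {k B M : Type*} [Field k] [Ring B]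
    [Algebra k B] [AddCommGroup M] [Module k M] [Module B M] [IsScalarTower k B M]
    [FiniteDimensional k M] (p : Submodule B M) : FiniteDimensional k p :=
  Module.Finite.of_injective (p.subtype.restrictScalars k) Subtype.val_injective

namespace Module

section Character

variable (k B : Type*) (M N : Type*) [Field k] [Ring B] [Algebra k B]
  [AddCommGroup M] [Module k M] [Module B M] [IsScalarTower k B M]
  [AddCommGroup N] [Module k N] [Module B N] [IsScalarTower k B N]

noncomputable def character : B →ₗ[k] k :=
  trace k M ∘ₗ (Algebra.lsmul k k M).toLinearMap

theorem character_apply (b : B) : character k B M b = trace k M (Algebra.lsmul k k M b) := rfl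

variable {k M N} in
theorem character_congr (e : M ≃ₗ[B] N) : character k B M = character k B N := by
  ext b
  rw [character_apply, character_apply, ← trace_conj' _ (e.restrictScalars k)]
  congr 1
  ext x
  simp [LinearEquiv.conj_apply]

variable [FiniteDimensional k M]

theorem character_prod [FiniteDimensional k N] :
    character k B (M × N) = character k B M + character k B N := by
  ext b
  exact trace_prodMap' (Algebra.lsmul k k M b) (Algebra.lsmul k k N b)

theorem character_one : character k B M 1 = finrank k M := by
  rw [character_apply, map_one, trace_one]

variable {B M}

theorem character_eq_add_of_isCompl {p q : Submodule B M} (h : IsCompl p q) :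
    character k B M = character k B p + character k B q := by
  rw [← character_prod, character_congr B (Submodule.prodEquivOfIsCompl p q h)]

theorem finrank_eq_add_of_isCompl {p q : Submodule B M} (h : IsCompl p q) :
    finrank k M = finrank k p + finrank k q := by
  rw [← finrank_prod, ((Submodule.prodEquivOfIsCompl p q h).restrictScalars k).finrank_eq]

theorem character_ne_zero [CharZero k] {e : B} (he : IsIdempotentElem e) {x : M}
    (hx : e • x ≠ 0) : character k B M e ≠ 0 := by
  rw [character_apply, ne_eq, (he.map (Algebra.lsmul k k M)).trace_eq_zero_iff]
  exact fun h => hx congr($h x)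

end Character

end Module

theorem IsSimpleModule.exists_section (B : Type*) [Ring B] [IsSemisimpleRing B] {S : Type*}
    [AddCommGroup S] [Module B S] [IsSimpleModule B S] {s : S} (hs : s ≠ 0) :
    ∃ σ : S →ₗ[B] B, ∀ x, σ x • s = x := by
  obtain ⟨σ, hσ⟩ := IsSemisimpleModule.lifting_property (toSpanSingleton B S s)
    (IsSimpleModule.toSpanSingleton_surjective B hs) LinearMap.id
  exact ⟨σ, fun x => congr($hσ x)⟩

theorem IsSemisimpleModule.prod {B M N : Type*} [Ring B] [AddCommGroup M] [Module B M]
    [AddCommGroup N] [Module B N] [IsSemisimpleModule B M] [IsSemisimpleModule B N] :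
    IsSemisimpleModule B (M × N) := by
  rw [← Submodule.topEquiv.isSemisimpleModule_iff_of_bijective (LinearEquiv.bijective _),
    ← LinearMap.sup_range_inl_inr]
  exact .sup (.range _) (.range _)

theorem IsSemisimpleRing.of_faithfulSMul (k B P : Type*) [Field k] [Ring B] [Algebra k B]
    [AddCommGroup P] [Module k P] [Module B P] [IsScalarTower k B P] [FiniteDimensional k P]
    [IsSemisimpleModule B P] [FaithfulSMul B P] : IsSemisimpleRing B := by
  let v := Module.finBasis k P
  refine IsSemisimpleModule.of_injective (LinearMap.pi fun i => toSpanSingleton B P (v i))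
    fun b b' h => FaithfulSMul.eq_of_smul_eq_smul (α := P) fun p => ?_
  have : Algebra.lsmul k k P b = Algebra.lsmul k k P b' := v.ext fun i => congr_fun h i
  exact congr($this p)

section BrauerNesbitt

variable (k : Type*) {B : Type*} (M N : Type*) [Field k] [CharZero k] [Ring B] [Algebra k B]
  [AddCommGroup M] [Module k M] [Module B M] [IsScalarTower k B M] [FiniteDimensional k M]
  [AddCommGroup N] [Module k N] [Module B N] [IsScalarTower k B N]

theorem Module.exists_submodule_linearEquiv_of_character_eq [IsSemisimpleRing B]
    (h : character k B M = character k B N) (S : Submodule B M) [IsSimpleModule B S] :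
    ∃ T : Submodule B N, Nonempty (S ≃ₗ[B] T) := by
  have := IsSimpleModule.nontrivial B S
  obtain ⟨s, hs⟩ := exists_ne (0 : S)
  obtain ⟨σ, hσ⟩ := IsSimpleModule.exists_section B hs
  have he : IsIdempotentElem (σ s) := by
    rw [IsIdempotentElem, ← smul_eq_mul, ← map_smul, hσ]
  have hes : σ s • (s : M) ≠ 0 := by
    rw [← Submodule.coe_smul, hσ]
    exact_mod_cast hs
  obtain ⟨n, hn⟩ : ∃ n : N, σ s • n ≠ 0 := by
    by_contra! h0
    refine character_ne_zero k he hes (h ▸ ?_)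
    rw [character_apply, show Algebra.lsmul k k N (σ s) = 0 from LinearMap.ext h0, map_zero]
  have hf : toSpanSingleton B N n ∘ₗ σ ≠ 0 := fun h0 => hn congr($h0 s)
  exact ⟨_, ⟨.ofInjective _ (LinearMap.injective_of_ne_zero hf)⟩⟩

theorem IsSemisimpleRing.nonempty_linearEquiv_of_character_eq [IsSemisimpleRing B]
    [FiniteDimensional k N] (h : character k B M = character k B N) :
    Nonempty (M ≃ₗ[B] N) := by
  induction hn : finrank k M using Nat.strong_induction_on generalizing M N with
  | _ n ih =>
  rcases subsingleton_or_nontrivial M with hM | hM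
  · have hN : finrank k N = 0 := by
      have := congr($h 1)
      rwa [character_one, character_one, finrank_zero_of_subsingleton, Nat.cast_zero, eq_comm,
        Nat.cast_eq_zero] at this
    have := finrank_zero_iff.mp hN
    exact ⟨.ofSubsingleton M N⟩
  obtain ⟨S, hS⟩ := IsSemisimpleModule.exists_simple_submodule B M
  obtain ⟨T, ⟨φ⟩⟩ := exists_submodule_linearEquiv_of_character_eq k M N h S
  obtain ⟨M₁, hM₁⟩ := exists_isCompl S
  obtain ⟨N₁, hN₁⟩ := exists_isCompl T
  have h₁ : character k B M₁ = character k B N₁ := by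
    rw [character_eq_add_of_isCompl k hM₁, character_eq_add_of_isCompl k hN₁,
      character_congr B φ] at h
    exact add_left_cancel h
  have hlt : finrank k M₁ < n := by
    have := IsSimpleModule.nontrivial B S
    have := finrank_pos (R := k) (M := S)
    have := finrank_eq_add_of_isCompl k hM₁
    omega
  obtain ⟨ψ⟩ := ih _ hlt M₁ N₁ h₁ rfl
  exact ⟨(Submodule.prodEquivOfIsCompl S M₁ hM₁).symm ≪≫ₗ φ.prodCongr ψ ≪≫ₗ
    Submodule.prodEquivOfIsCompl T N₁ hN₁⟩

theorem Module.nonempty_linearEquiv_of_character_eq {A : Type*} [Ring A] [Algebra k A]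
    [Module A M] [IsScalarTower k A M] [IsSemisimpleModule A M]
    [Module A N] [IsScalarTower k A N] [IsSemisimpleModule A N] [FiniteDimensional k N]
    (h : character k A M = character k A N) : Nonempty (M ≃ₗ[A] N) := by
  set I := annihilator A (M × N)
  have hM : IsTorsionBySet A M I := (isTorsionBySet_iff_subset_annihilator _ _).mpr <|
    SetLike.coe_subset_coe.mpr (annihilator_prod.trans_le inf_le_left)
  have hN : IsTorsionBySet A N I := (isTorsionBySet_iff_subset_annihilator _ _).mpr <|
    SetLike.coe_subset_coe.mpr (annihilator_prod.trans_le inf_le_right)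
  let := hM.module
  let := hN.module
  have := hM.isScalarTower (S := k)
  have := hN.isScalarTower (S := k)
  have := hM.isSemisimpleModule_iff.mpr ‹_›
  have := hN.isSemisimpleModule_iff.mpr ‹_›
  have : IsSemisimpleModule (A ⧸ I) (M × N) := .prod
  have : FaithfulSMul (A ⧸ I) (M × N) := by
    refine ⟨fun {b b'} h => ?_⟩
    obtain ⟨a, rfl⟩ := Ideal.Quotient.mk_surjective b
    obtain ⟨a', rfl⟩ := Ideal.Quotient.mk_surjective b'
    refine Ideal.Quotient.eq.mpr (mem_annihilator.mpr fun p => ?_)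
    rw [sub_smul, sub_eq_zero]
    exact h p
  have := IsSemisimpleRing.of_faithfulSMul k (A ⧸ I) (M × N)
  have hI : character k (A ⧸ I) M = character k (A ⧸ I) N := by
    refine LinearMap.ext fun b => ?_
    obtain ⟨a, rfl⟩ := Ideal.Quotient.mk_surjective b
    exact congr($h a)
  obtain ⟨F⟩ := IsSemisimpleRing.nonempty_linearEquiv_of_character_eq k M N hI
  exact ⟨{ F with map_smul' := fun a m => F.map_smul (Ideal.Quotient.mk I a) m }⟩

end BrauerNesbitt

/-- Brauer–Nesbitt in characteristic zero: two finite-dimensional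
semisimple representations of a monoid `G` over a field `k` of characteristic zero
with equal characters are isomorphic as representations. Semisimplicity is phrased
as semisimplicity of the associated `MonoidAlgebra k G`-module. -/
theorem stmt_16 (k : Type*) [Field k] [CharZero k] (G : Type*) [Monoid G]
    (V W : Type*) [AddCommGroup V] [Module k V] [AddCommGroup W] [Module k W]
    [FiniteDimensional k V] [FiniteDimensional k W]
    (ρ : Representation k G V) (σ : Representation k G W)
    (hρ : IsSemisimpleModule (MonoidAlgebra k G) ρ.asModule)
    (hσ : IsSemisimpleModule (MonoidAlgebra k G) σ.asModule)
    (htr : ∀ g : G, LinearMap.trace k V (ρ g) = LinearMap.trace k W (σ g)) :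
    ∃ e : V ≃ₗ[k] W, ∀ (g : G) (v : V), e (ρ g v) = σ g (e v) := by
  have hχ : character k (MonoidAlgebra k G) ρ.asModule =
      character k (MonoidAlgebra k G) σ.asModule := by
    ext g
    change trace k V (ρ.asAlgebraHom (MonoidAlgebra.single g 1)) =
      trace k W (σ.asAlgebraHom (MonoidAlgebra.single g 1))
    rw [Representation.asAlgebraHom_single_one, Representation.asAlgebraHom_single_one, htr]
  obtain ⟨F⟩ := nonempty_linearEquiv_of_character_eq k ρ.asModule σ.asModule hχ
  refine ⟨ρ.asModuleEquiv.symm ≪≫ₗ F.restrictScalars k ≪≫ₗ σ.asModuleEquiv, fun g v => ?_⟩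
  rw [LinearEquiv.trans_apply, LinearEquiv.trans_apply, Representation.asModuleEquiv_symm_map_rho,
    LinearEquiv.restrictScalars_apply, F.map_smul, Representation.asModuleEquiv_map_smul,
    Representation.asAlgebraHom_of]
  rfl
end
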